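/- For any infinite compact Hausdorff spaces K and L, the spaces C_w(K) and C_p(L) are not linearly homeomorphic: there is no linear bijection T : C(K) → C(L) which is a homeomorphism from C_w(K) onto C_p(L). -/
import Mathlib


/-- The weak topology on `C(K, ℝ)`: the coarsest topology making all continuous linear
functionals on the Banach space `C(K)` continuous. -/
noncomputable def weakTopology (K : Type*) [TopologicalSpace K] [CompactSpace K] :
    TopologicalSpace C(K, ℝ) :=
  ⨅ μ : C(K, ℝ) →L[ℝ] ℝ, TopologicalSpace.induced μ inferInstance

/-- The topology of pointwise convergence on `C(K, ℝ)`, inherited from the product `K → ℝ`. -/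
noncomputable def pointwiseTopology (K : Type*) [TopologicalSpace K] :
    TopologicalSpace C(K, ℝ) :=
  TopologicalSpace.induced (fun f : C(K, ℝ) => (f : K → ℝ)) Pi.topologicalSpace

/-- For any infinite compact Hausdorff spaces `K` and `L`, the spaces `C_w(K)` and `C_p(L)`
are not linearly homeomorphic. -/
theorem statement1 (K L : Type*)
    [TopologicalSpace K] [CompactSpace K] [T2Space K] [Infinite K]
    [TopologicalSpace L] [CompactSpace L] [T2Space L] [Infinite L] :
    ¬ ∃ T : C(K, ℝ) ≃ₗ[ℝ] C(L, ℝ),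
        @Continuous _ _ (weakTopology K) (pointwiseTopology L) T ∧
        @Continuous _ _ (pointwiseTopology L) (weakTopology K) T.symm := by
  classical
  rintro ⟨T, hT, hT'⟩
  -- identity is continuous from norm topology to weak topology on C(K)
  have hid : @Continuous C(K, ℝ) C(K, ℝ) _ (weakTopology K) id := by
    apply continuous_id_iff_le.2
    unfold weakTopology
    exact le_iInf fun μ => continuous_iff_le_induced.1 μ.continuous
  have hTnp : @Continuous C(K, ℝ) C(L, ℝ) _ (pointwiseTopology L) T :=
    @Continuous.comp _ _ _ _ (weakTopology K) (pointwiseTopology L) _ _ hT hid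
  -- evaluation is pointwise-continuous
  have heval : ∀ l : L, @Continuous C(L, ℝ) ℝ (pointwiseTopology L) _ (fun f => f l) := by
    intro l
    have h : @Continuous C(L,ℝ) (L → ℝ) (pointwiseTopology L) _ (fun f => (f : L → ℝ)) := by
      unfold pointwiseTopology
      exact continuous_induced_dom
    exact @Continuous.comp _ _ _ (pointwiseTopology L) _ _ _ _ (continuous_apply l) h
  have hTl : ∀ l : L, Continuous (fun f : C(K, ℝ) => T f l) := fun l =>
    @Continuous.comp _ _ _ _ (pointwiseTopology L) _ _ _ (heval l) hTnp
  -- closed graph theorem: T is norm continuous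
  have hTcont : Continuous ((T : C(K, ℝ) →ₗ[ℝ] C(L, ℝ)) : C(K, ℝ) → C(L, ℝ)) := by
    apply LinearMap.continuous_of_seq_closed_graph
    intro u x y hux huy
    ext l
    have h1 : Filter.Tendsto (fun n => T (u n) l) Filter.atTop (nhds (T x l)) :=
      ((hTl l).tendsto x).comp hux
    have h2 : Filter.Tendsto (fun n => T (u n) l) Filter.atTop (nhds (y l)) :=
      ((ContinuousEvalConst.continuous_eval_const l).tendsto y).comp huy
    exact tendsto_nhds_unique h2 h1
  set Tc : C(K, ℝ) →L[ℝ] C(L, ℝ) := ⟨(T : C(K, ℝ) →ₗ[ℝ] C(L, ℝ)), hTcont⟩ with hTcdef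
  -- distinct points of L
  let e : ℕ ↪ L := Infinite.natEmbedding L
  -- the functional ψ f = ∑ 2^{-(n+1)} f (e n)
  set w : ℕ → ℝ := fun n => 1 / 2 ^ (n + 1) with hwdef
  have hw : ∀ n, 0 < w n := fun n => by positivity
  have hwpow : ∀ n, w n = (1 / 2 : ℝ) ^ (n + 1) := fun n => by
    rw [hwdef]; simp [div_pow]
  have hws : Summable w := by
    rw [funext hwpow]
    exact (summable_nat_add_iff 1).2 summable_geometric_two
  have hwsum : ∑' n, w n = 1 := by
    have heq : w = fun n => 1 / 2 / 2 ^ n := by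
      funext n
      rw [hwdef]
      show (1 : ℝ) / 2 ^ (n + 1) = 1 / 2 / 2 ^ n
      rw [div_div, pow_succ, mul_comm]
    rw [heq]
    exact tsum_geometric_two' 1
  have hsum : ∀ f : C(L, ℝ), Summable (fun n => w n * f (e n)) := by
    intro f
    apply Summable.of_norm
    apply Summable.of_nonneg_of_le (fun n => norm_nonneg _) (fun n => ?_) (hws.mul_right ‖f‖)
    rw [norm_mul, Real.norm_of_nonneg (hw n).le]
    exact mul_le_mul_of_nonneg_left (f.norm_coe_le_norm (e n)) (hw n).le
  let ψlin : C(L, ℝ) →ₗ[ℝ] ℝ :=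
    { toFun := fun f => ∑' n, w n * f (e n)
      map_add' := by
        intro f g
        simp only [ContinuousMap.add_apply, mul_add]
        exact Summable.tsum_add (hsum f) (hsum g)
      map_smul' := by
        intro c f
        simp only [ContinuousMap.smul_apply, smul_eq_mul, RingHom.id_apply]
        rw [← tsum_mul_left]
        congr 1; ext n; ring }
  have hψbound : ∀ f : C(L, ℝ), ‖ψlin f‖ ≤ 1 * ‖f‖ := by
    intro f
    rw [one_mul]
    calc ‖∑' n, w n * f (e n)‖ ≤ ∑' n, ‖w n * f (e n)‖ :=
          norm_tsum_le_tsum_norm (hsum f).norm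
      _ ≤ ∑' n, w n * ‖f‖ := by
          apply Summable.tsum_le_tsum _ (hsum f).norm (hws.mul_right ‖f‖)
          intro n
          rw [norm_mul, Real.norm_of_nonneg (hw n).le]
          exact mul_le_mul_of_nonneg_left (f.norm_coe_le_norm (e n)) (hw n).le
      _ = ‖f‖ := by rw [tsum_mul_right, hwsum, one_mul]
  let ψ : C(L, ℝ) →L[ℝ] ℝ := ψlin.mkContinuous 1 hψbound
  -- ψ is pointwise continuous
  let φ : C(K, ℝ) →L[ℝ] ℝ := ψ.comp Tc
  have hφ : @Continuous C(K, ℝ) ℝ (weakTopology K) _ φ := by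
    unfold weakTopology
    exact continuous_iInf_dom (i := φ) continuous_induced_dom
  have hψp : @Continuous C(L, ℝ) ℝ (pointwiseTopology L) _ ψ := by
    have hfun : (ψ : C(L, ℝ) → ℝ) = φ ∘ T.symm := by
      funext f
      show ψ f = ψ (Tc (T.symm f))
      have : Tc (T.symm f) = f := T.apply_symm_apply f
      rw [this]
    rw [hfun]
    exact @Continuous.comp _ _ _ (pointwiseTopology L) (weakTopology K) _ _ _ hφ hT'
  -- hence ψ vanishes on functions vanishing on a finite set
  have h0 : ψ (0 : C(L, ℝ)) = 0 := map_zero ψ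
  have hnhds : (ψ ⁻¹' Set.Ioo (-1 : ℝ) 1) ∈ @nhds C(L, ℝ) (pointwiseTopology L) 0 := by
    have := @Continuous.tendsto _ _ (pointwiseTopology L) _ _ hψp 0
    rw [h0] at this
    exact this (Ioo_mem_nhds (by norm_num) (by norm_num))
  rw [pointwiseTopology, nhds_induced] at hnhds
  obtain ⟨s, hs, hsub⟩ := hnhds
  have hs' : s ∈ Filter.pi (fun _ : L => nhds (0 : ℝ)) := by
    have heq : nhds (⇑(0 : C(L, ℝ))) = Filter.pi (fun _ : L => nhds (0 : ℝ)) := by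
      rw [nhds_pi]; rfl
    rwa [heq] at hs
  obtain ⟨I, hIfin, V, hV, hIV⟩ := Filter.mem_pi.1 hs'
  have hvanish : ∀ f : C(L, ℝ), (∀ l ∈ I, f l = 0) → ψ f = 0 := by
    intro f hf
    by_contra hne
    obtain ⟨c, hc⟩ : ∃ c : ℝ, 1 < |c * ψ f| := ⟨2 / ψ f, by
      rw [abs_mul, abs_div]
      rw [div_mul_cancel₀]
      · norm_num
      · exact abs_ne_zero.2 hne⟩
    have hmem : (c • f : C(L, ℝ)) ∈ (fun g : C(L, ℝ) => (g : L → ℝ)) ⁻¹' s := by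
      apply Set.mem_preimage.2
      apply hIV
      intro l hl
      have hfl : f l = 0 := hf l hl
      have : (c • f : C(L, ℝ)) l = 0 := by
        simp [hfl]
      rw [this]
      exact mem_of_mem_nhds (hV l)
    have := hsub hmem
    simp only [Set.mem_preimage, map_smul, smul_eq_mul, Set.mem_Ioo] at this
    have habs : |c * ψ f| < 1 := abs_lt.2 this
    linarith
  -- pick a point outside I
  have hex : ∃ n : ℕ, e n ∉ I := by
    by_contra hall
    push_neg at hall
    have hfin : (Set.univ : Set ℕ).Finite :=
      Set.Finite.subset (hIfin.preimage e.injective.injOn) (fun n _ => hall n)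
    exact Set.infinite_univ hfin
  obtain ⟨n, hn⟩ := hex
  -- Urysohn
  have hIclosed : IsClosed I := hIfin.isClosed
  have hdisj : Disjoint I ({e n} : Set L) := by
    simp [Set.disjoint_singleton_right, hn]
  obtain ⟨f, hf0, hf1, hf01⟩ :=
    exists_continuous_zero_one_of_isClosed hIclosed isClosed_singleton hdisj
  have hψf0 : ψ f = 0 := hvanish f (fun l hl => hf0 hl)
  have hpos : w n ≤ ψ f := by
    have h1 : f (e n) = 1 := hf1 rfl
    have : ψ f = ∑' m, w m * f (e m) := rfl
    rw [this]
    have := Summable.le_tsum (hsum f) n (fun m _ => mul_nonneg (hw m).le (hf01 (e m)).1)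
    simpa [h1] using this
  linarith [hw n]
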